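/- arXiv:1507.08242 — 6 statements merged into one kernel-verified Lean document; each statement's English description precedes it below -/
import Mathlib

section
/- For every n ≥ 1, the sum over all perfect matchings D of the complete graph K_{2n} (with vertices placed in convex position in the plane, edges drawn as straight segments) of (-1)^{t(D)}, where t(D) is the number of pairs of edges of D that cross, equals 1. -/
/-!
The standard matching `pairUp n`, joining `2i` to `2i + 1`, has no crossings. Any other
matching `f` has a first vertex `a` with `f a ≠ a + 1`; it is even, and `f` maps everything
below `a` into itself, so `f a` and `f (a + 1)` lie beyond `a + 1`. Exchanging the labels `a` and
`a + 1` gives another matching with the same first such vertex, hence an involution on the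
non-standard matchings. Since `a` and `a + 1` are adjacent, the relabelling preserves every
crossing except the one between the chords at `a` and `a + 1`, and those two chords cross in
exactly one of the two matchings. So the signs cancel in pairs and only `pairUp n` is left.
-/

open scoped Classical

open Finset Equiv Function

section Swap

variable {α : Type*} [LinearOrder α] {a b : α}

theorem swap_lt_swap_iff_of_covBy (hab : a ⋖ b) {x y : α} (h₁ : (x, y) ≠ (a, b))
    (h₂ : (x, y) ≠ (b, a)) : swap a b x < swap a b y ↔ x < y := by
  have below : ∀ {z}, z < b → z ≠ a → z < a := fun hz hza => (hab.le_of_lt hz).lt_of_ne hza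
  have above : ∀ {z}, a < z → z ≠ b → b < z := fun hz hzb => (hab.ge_of_gt hz).lt_of_ne' hzb
  have := hab.lt
  simp only [swap_apply_def]
  grind

end Swap

theorem involutive_swap_mul_mul_swap {α : Type*} [DecidableEq α] {f : Perm α}
    (hf : Involutive f) (a b : α) : Involutive (swap a b * f * swap a b) := fun x => by
  simp [hf _]

theorem swap_mul_mul_swap_apply_ne {α : Type*} [DecidableEq α] {f : Perm α}
    (hfix : ∀ x, f x ≠ x) (a b x : α) : (swap a b * f * swap a b) x ≠ x := by
  simpa [swap_apply_eq_iff] using hfix (swap a b x)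

section Crossings

variable {α : Type*} [LinearOrder α] [Fintype α] {a b : α} {f : Perm α}

/-- The crossing pairs of chords `{p, f p}`, `{q, f q}` of a matching `f`, each recorded once as
`(p, q)` with `p < q < f p < f q`. -/
def crossings (f : Perm α) : Finset (α × α) :=
  univ.filter fun pr =>
    pr.1 < f pr.1 ∧ pr.2 < f pr.2 ∧ pr.1 < pr.2 ∧ pr.2 < f pr.1 ∧ f pr.1 < f pr.2

theorem mem_crossings {p q : α} :
    (p, q) ∈ crossings f ↔ p < f p ∧ q < f q ∧ p < q ∧ q < f p ∧ f p < f q := by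
  simp [crossings]

theorem mk_mem_crossings_iff (hab : a < b) (ha : b < f a) :
    (a, b) ∈ crossings f ↔ f a < f b := by
  rw [mem_crossings]
  exact ⟨fun h => h.2.2.2.2, fun h => ⟨hab.trans ha, ha.trans h, hab, ha, h⟩⟩

theorem swap_mem_crossings_conj_iff (hf : Involutive f) (hab : a ⋖ b) (ha : b < f a)
    (hb : b < f b) {p q : α} (h₁ : (p, q) ≠ (a, b)) (h₂ : (p, q) ≠ (b, a)) :
    (swap a b p, swap a b q) ∈ crossings (swap a b * f * swap a b) ↔
      (p, q) ∈ crossings f := by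
  simp only [mem_crossings, Perm.mul_apply, swap_apply_self]
  have := hab.lt
  by_cases hp : f p = a ∨ f p = b
  · -- then `p` is `f a` or `f b`, and its chord runs backwards on both sides
    have hpb : b < p := by rcases hp with hp | hp <;> rwa [← hf p, hp]
    have hσp : swap a b p = p := swap_apply_of_ne_of_ne (by order) (by order)
    have hfp : f p ≤ b := by rcases hp with hp | hp <;> simp [hp, this.le]
    have hσfp : swap a b (f p) ≤ b := by rcases hp with hp | hp <;> simp [hp, this.le]
    exact ⟨fun h => absurd h.1 (by order), fun h => absurd h.1 (by order)⟩
  push Not at hp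
  rw [swap_lt_swap_iff_of_covBy hab (by grind) (by grind),
    swap_lt_swap_iff_of_covBy hab (by grind) (by grind),
    swap_lt_swap_iff_of_covBy hab h₁ h₂,
    swap_lt_swap_iff_of_covBy hab (by grind) (by grind),
    swap_lt_swap_iff_of_covBy hab (by grind) (by grind)]

theorem card_erase_crossings_eq_conj_swap (hf : Involutive f) (hab : a ⋖ b) (ha : b < f a)
    (hb : b < f b) :
    #((crossings f).erase (a, b)) = #((crossings (swap a b * f * swap a b)).erase (a, b)) := by
  refine card_equiv ((swap a b).prodCongr (swap a b)) fun ⟨p, q⟩ => ?_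
  simp only [mem_erase, prodCongr_apply, Prod.map_apply]
  have not_mem : ∀ {g : Perm α}, (b, a) ∉ crossings g := fun hm =>
    (mem_crossings.1 hm).2.2.1.not_gt hab.lt
  by_cases h₁ : (p, q) = (a, b)
  · simp_all
  by_cases h₂ : (p, q) = (b, a)
  · simp_all
  rw [swap_mem_crossings_conj_iff hf hab ha hb h₁ h₂]
  grind

theorem neg_one_pow_card_crossings_conj_swap (hf : Involutive f) (hab : a ⋖ b)
    (ha : b < f a) (hb : b < f b) :
    (-1 : ℤ) ^ #(crossings (swap a b * f * swap a b)) = -(-1) ^ #(crossings f) := by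
  set g := swap a b * f * swap a b
  have hga : g a = f b := by simp [g, swap_apply_of_ne_of_ne (hab.lt.trans hb).ne' hb.ne']
  have hgb : g b = f a := by simp [g, swap_apply_of_ne_of_ne (hab.lt.trans ha).ne' ha.ne']
  have hcard := card_erase_crossings_eq_conj_swap hf hab ha hb
  have hf_ab := mk_mem_crossings_iff (f := f) hab.lt ha
  have hg_ab := mk_mem_crossings_iff (f := g) hab.lt (hga ▸ hb)
  rw [hga, hgb] at hg_ab
  rcases (f.injective.ne hab.lt.ne).lt_or_gt with hlt | hlt
  · rw [← card_erase_add_one (hf_ab.2 hlt), hcard,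
      erase_eq_of_notMem (by rw [hg_ab]; exact hlt.not_gt)]
    ring
  · rw [← card_erase_add_one (hg_ab.2 hlt), ← hcard,
      erase_eq_of_notMem (by rw [hf_ab]; exact hlt.not_gt)]
    ring

end Crossings

section FirstDiff

variable {α β : Type*} [LinearOrder α] [Fintype α] {f g : α → β}

noncomputable def firstDiff (f g : α → β) (h : f ≠ g) : α :=
  (univ.filter fun x => f x ≠ g x).min' <| by
    obtain ⟨x, hx⟩ := ne_iff.1 h
    exact ⟨x, mem_filter.2 ⟨mem_univ x, hx⟩⟩

theorem apply_firstDiff_ne (h : f ≠ g) : f (firstDiff f g h) ≠ g (firstDiff f g h) :=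
  (mem_filter.1 (min'_mem (univ.filter fun x => f x ≠ g x) _)).2

theorem apply_eq_of_lt_firstDiff (h : f ≠ g) {x : α} (hx : x < firstDiff f g h) :
    f x = g x := by
  by_contra hne
  exact hx.not_ge (min'_le _ _ (mem_filter.2 ⟨mem_univ x, hne⟩))

theorem firstDiff_eq (h : f ≠ g) {a : α} (ha : f a ≠ g a) (hlt : ∀ x < a, f x = g x) :
    firstDiff f g h = a :=
  le_antisymm (min'_le _ _ (mem_filter.2 ⟨mem_univ a, ha⟩))
    (not_lt.1 fun hlt' => apply_firstDiff_ne h (hlt _ hlt'))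

end FirstDiff

section PairUp

variable {n : ℕ}

def pairUp (n : ℕ) : Perm (Fin (2 * n)) :=
  Involutive.toPerm
    (fun x => ⟨if (x : ℕ) % 2 = 0 then x + 1 else x - 1, by split_ifs <;> omega⟩)
    fun x => by ext; simp only; split_ifs <;> omega

theorem val_pairUp (x : Fin (2 * n)) :
    (pairUp n x : ℕ) = if (x : ℕ) % 2 = 0 then (x : ℕ) + 1 else (x : ℕ) - 1 := rfl

theorem pairUp_involutive : Involutive (pairUp n) :=
  fun x => by ext; simp only [val_pairUp]; split_ifs <;> omega

theorem pairUp_apply_ne (x : Fin (2 * n)) : pairUp n x ≠ x := by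
  rw [Ne, Fin.ext_iff, val_pairUp]
  split_ifs <;> omega

theorem crossings_pairUp : crossings (pairUp n) = ∅ := by
  ext ⟨p, q⟩
  simp only [mem_crossings, Fin.lt_def, val_pairUp, notMem_empty, iff_false]
  split_ifs <;> omega

theorem pairUp_lt {a x : Fin (2 * n)} (ha : (a : ℕ) % 2 = 0) (hx : x < a) : pairUp n x < a := by
  rw [Fin.lt_def, val_pairUp] at *
  split_ifs <;> omega

end PairUp

section FirstUnpaired

variable {n : ℕ} {f : Perm (Fin (2 * n))}

noncomputable def firstUnpaired (f : Perm (Fin (2 * n))) (h : f ≠ pairUp n) : Fin (2 * n) :=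
  firstDiff f (pairUp n) (DFunLike.coe_injective.ne h)

theorem apply_firstUnpaired_ne (h : f ≠ pairUp n) :
    f (firstUnpaired f h) ≠ pairUp n (firstUnpaired f h) :=
  apply_firstDiff_ne _

theorem apply_eq_pairUp_of_lt_firstUnpaired (h : f ≠ pairUp n) {x : Fin (2 * n)}
    (hx : x < firstUnpaired f h) : f x = pairUp n x :=
  apply_eq_of_lt_firstDiff _ hx

theorem firstUnpaired_even (hf : Involutive f) (h : f ≠ pairUp n) :
    (firstUnpaired f h : ℕ) % 2 = 0 := by
  have hne := apply_firstUnpaired_ne h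
  have hlt := fun x => apply_eq_pairUp_of_lt_firstUnpaired (x := x) h
  generalize firstUnpaired f h = a at hne hlt ⊢
  by_contra hodd
  have hfy : f ⟨a - 1, by omega⟩ = a := by
    rw [hlt _ (Fin.lt_def.2 (by dsimp only; omega)), Fin.ext_iff, val_pairUp]
    simp only
    split_ifs <;> omega
  apply hne
  rw [← hfy, hf, Fin.ext_iff, val_pairUp]
  simp only
  split_ifs <;> omega

theorem firstUnpaired_le_apply (hf : Involutive f) (h : f ≠ pairUp n) {x : Fin (2 * n)}
    (hx : firstUnpaired f h ≤ x) : firstUnpaired f h ≤ f x := by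
  by_contra! hlt
  have hfx := apply_eq_pairUp_of_lt_firstUnpaired h hlt
  rw [hf] at hfx
  exact hx.not_gt (hfx ▸ pairUp_lt (firstUnpaired_even hf h) hlt)

theorem val_pairUp_firstUnpaired (hf : Involutive f) (h : f ≠ pairUp n) :
    (pairUp n (firstUnpaired f h) : ℕ) = firstUnpaired f h + 1 := by
  rw [val_pairUp, if_pos (firstUnpaired_even hf h)]

theorem firstUnpaired_covBy (hf : Involutive f) (h : f ≠ pairUp n) :
    firstUnpaired f h ⋖ pairUp n (firstUnpaired f h) := by
  have := val_pairUp_firstUnpaired hf h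
  exact ⟨by rw [Fin.lt_def]; omega, fun c h₁ h₂ => by rw [Fin.lt_def] at h₁ h₂; omega⟩

theorem pairUp_firstUnpaired_lt_apply (hf : Involutive f) (hfix : ∀ x, f x ≠ x)
    (h : f ≠ pairUp n) :
    pairUp n (firstUnpaired f h) < f (firstUnpaired f h) ∧
      pairUp n (firstUnpaired f h) < f (pairUp n (firstUnpaired f h)) := by
  have hb := val_pairUp_firstUnpaired hf h
  have ha₁ := firstUnpaired_le_apply hf h le_rfl
  have hb₁ := firstUnpaired_le_apply hf h (firstUnpaired_covBy hf h).lt.le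
  have ha₂ := apply_firstUnpaired_ne h
  have hb₂ : f (pairUp n (firstUnpaired f h)) ≠ firstUnpaired f h := fun hba =>
    ha₂ ((congrArg f hba).symm.trans (hf _))
  have ha₃ := hfix (firstUnpaired f h)
  have hb₃ := hfix (pairUp n (firstUnpaired f h))
  simp only [Fin.le_def, Fin.lt_def, Ne, Fin.ext_iff] at *
  omega

noncomputable def flipFirstUnpaired (f : Perm (Fin (2 * n))) (h : f ≠ pairUp n) :
    Perm (Fin (2 * n)) :=
  swap (firstUnpaired f h) (pairUp n (firstUnpaired f h)) * f *
    swap (firstUnpaired f h) (pairUp n (firstUnpaired f h))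

theorem flipFirstUnpaired_apply_of_lt (hf : Involutive f) (h : f ≠ pairUp n) {x : Fin (2 * n)}
    (hx : x < firstUnpaired f h) : flipFirstUnpaired f h x = pairUp n x := by
  have hb := (firstUnpaired_covBy hf h).lt
  have hpx := pairUp_lt (firstUnpaired_even hf h) hx
  rw [flipFirstUnpaired, Perm.mul_apply, Perm.mul_apply,
    swap_apply_of_ne_of_ne hx.ne (hx.trans hb).ne, apply_eq_pairUp_of_lt_firstUnpaired h hx,
    swap_apply_of_ne_of_ne hpx.ne (hpx.trans hb).ne]

theorem flipFirstUnpaired_apply_firstUnpaired (hf : Involutive f) (hfix : ∀ x, f x ≠ x)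
    (h : f ≠ pairUp n) :
    flipFirstUnpaired f h (firstUnpaired f h) = f (pairUp n (firstUnpaired f h)) := by
  have hb := (pairUp_firstUnpaired_lt_apply hf hfix h).2
  rw [flipFirstUnpaired, Perm.mul_apply, Perm.mul_apply, swap_apply_left,
    swap_apply_of_ne_of_ne ((firstUnpaired_covBy hf h).lt.trans hb).ne' hb.ne']

theorem flipFirstUnpaired_apply_firstUnpaired_ne (hf : Involutive f) (hfix : ∀ x, f x ≠ x)
    (h : f ≠ pairUp n) :
    flipFirstUnpaired f h (firstUnpaired f h) ≠ pairUp n (firstUnpaired f h) := by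
  rw [flipFirstUnpaired_apply_firstUnpaired hf hfix h]
  exact hfix _

theorem flipFirstUnpaired_ne_pairUp (hf : Involutive f) (hfix : ∀ x, f x ≠ x)
    (h : f ≠ pairUp n) : flipFirstUnpaired f h ≠ pairUp n := fun heq =>
  flipFirstUnpaired_apply_firstUnpaired_ne hf hfix h (by rw [heq])

theorem firstUnpaired_flipFirstUnpaired (hf : Involutive f) (hfix : ∀ x, f x ≠ x)
    (h : f ≠ pairUp n) (h' : flipFirstUnpaired f h ≠ pairUp n) :
    firstUnpaired (flipFirstUnpaired f h) h' = firstUnpaired f h :=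
  firstDiff_eq _ (flipFirstUnpaired_apply_firstUnpaired_ne hf hfix h) fun _ =>
    flipFirstUnpaired_apply_of_lt hf h

theorem flipFirstUnpaired_flipFirstUnpaired (hf : Involutive f) (hfix : ∀ x, f x ≠ x)
    (h : f ≠ pairUp n) (h' : flipFirstUnpaired f h ≠ pairUp n) :
    flipFirstUnpaired (flipFirstUnpaired f h) h' = f := by
  rw [flipFirstUnpaired, firstUnpaired_flipFirstUnpaired hf hfix h h', flipFirstUnpaired]
  simp [mul_assoc]

theorem flipFirstUnpaired_ne_self (hf : Involutive f) (hfix : ∀ x, f x ≠ x)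
    (h : f ≠ pairUp n) : flipFirstUnpaired f h ≠ f := fun heq => by
  have := flipFirstUnpaired_apply_firstUnpaired hf hfix h
  rw [heq] at this
  exact (firstUnpaired_covBy hf h).lt.ne (f.injective this)

theorem neg_one_pow_card_crossings_flipFirstUnpaired (hf : Involutive f)
    (hfix : ∀ x, f x ≠ x) (h : f ≠ pairUp n) :
    (-1 : ℤ) ^ #(crossings (flipFirstUnpaired f h)) = -(-1) ^ #(crossings f) :=
  neg_one_pow_card_crossings_conj_swap hf (firstUnpaired_covBy hf h)
    (pairUp_firstUnpaired_lt_apply hf hfix h).1 (pairUp_firstUnpaired_lt_apply hf hfix h).2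

end FirstUnpaired

theorem statement0_general (n : ℕ) :
    ∑ f ∈ Finset.univ.filter
        (fun f : Equiv.Perm (Fin (2 * n)) => Function.Involutive f ∧ ∀ x, f x ≠ x),
      (-1 : ℤ) ^ ((Finset.univ.filter
        (fun pr : Fin (2 * n) × Fin (2 * n) =>
          pr.1 < f pr.1 ∧ pr.2 < f pr.2 ∧ pr.1 < pr.2 ∧ pr.2 < f pr.1 ∧ f pr.1 < f pr.2)).card)
    = 1 := by
  set M := univ.filter fun f : Perm (Fin (2 * n)) => Involutive f ∧ ∀ x, f x ≠ x
  change ∑ f ∈ M, (-1 : ℤ) ^ #(crossings f) = 1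
  have hmem : ∀ {f}, f ∈ M.erase (pairUp n) →
      (Involutive f ∧ ∀ x, f x ≠ x) ∧ f ≠ pairUp n :=
    fun hf => ⟨(mem_filter.1 (mem_of_mem_erase hf)).2, ne_of_mem_erase hf⟩
  have hcancel : ∑ f ∈ M.erase (pairUp n), (-1 : ℤ) ^ #(crossings f) = 0 := by
    refine sum_involution (fun f hf => flipFirstUnpaired f (hmem hf).2) (fun f hf => ?_)
      (fun f hf _ => ?_) (fun f hf => ?_) (fun f hf => ?_)
    all_goals obtain ⟨⟨hinv, hfix⟩, hne⟩ := hmem hf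
    · rw [neg_one_pow_card_crossings_flipFirstUnpaired hinv hfix hne, add_neg_cancel]
    · exact flipFirstUnpaired_ne_self hinv hfix hne
    · exact mem_erase.2 ⟨flipFirstUnpaired_ne_pairUp hinv hfix hne, mem_filter.2 ⟨mem_univ _,
        involutive_swap_mul_mul_swap hinv _ _, swap_mul_mul_swap_apply_ne hfix _ _⟩⟩
    · exact flipFirstUnpaired_flipFirstUnpaired hinv hfix hne _
  have hpairUp : pairUp n ∈ M := mem_filter.2 ⟨mem_univ _, pairUp_involutive, pairUp_apply_ne⟩
  rw [← sum_erase_add M _ hpairUp, hcancel, crossings_pairUp, card_empty, pow_zero, zero_add]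

/-- For every `n ≥ 1`, the sum over all perfect matchings `D` of the
complete graph `K_{2n}` (vertices in convex position, identified with fixed-point-free
involutions of `Fin (2n)`) of `(-1)^{t(D)}`, where `t(D)` is the number of pairs of
chords of `D` that cross (i.e. interleave in the cyclic order), equals `1`. -/
theorem statement0 (n : ℕ) (hn : 1 ≤ n) :
    ∑ f ∈ Finset.univ.filter
        (fun f : Equiv.Perm (Fin (2 * n)) => Function.Involutive f ∧ ∀ x, f x ≠ x),
      (-1 : ℤ) ^ ((Finset.univ.filter
        (fun pr : Fin (2 * n) × Fin (2 * n) =>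
          pr.1 < f pr.1 ∧ pr.2 < f pr.2 ∧ pr.1 < pr.2 ∧ pr.2 < f pr.1 ∧ f pr.1 < f pr.2)).card)
    = 1 :=
  statement0_general n
end

section
/- Let H be a finite-dimensional Z/2-vector space with a nondegenerate alternating bilinear form, and for each quadratic form q refining it define the Arf invariant Arf(q) ∈ Z/2 by (-1)^{Arf(q)} = |H|^{-1/2} · Σ_{α ∈ H} (-1)^{q(α)}. Then for every α ∈ H, |H|^{-1/2} · Σ_q (-1)^{Arf(q) + q(α)} = 1, where the sum ranges over all quadratic forms q refining the given bilinear form. -/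
open scoped Classical

lemma zmod2_cases (x : ZMod 2) : x = 0 ∨ x = 1 := by revert x; decide
lemma zmod2_add_self (x : ZMod 2) : x + x = 0 := by revert x; decide
lemma zmod2_r1 : ∀ x y z : ZMod 2, x + y = z + (x + y + z) := by decide
lemma zmod2_r2 : ∀ x y u v w : ZMod 2, x + y + u + (v + w) = x + v + (y + w) + u := by decide
lemma zmod2_one_ne (x : ZMod 2) : x + 1 ≠ x := by revert x; decide

lemma pow_val_add (x y : ZMod 2) : (-1:ℝ)^((x+y).val) = (-1)^x.val * (-1)^y.val := by
  rcases zmod2_cases x with rfl|rfl <;> rcases zmod2_cases y with rfl|rfl <;>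
    norm_num [show ((2:ZMod 2)).val = 0 from rfl, show ((0:ZMod 2)).val = 0 from rfl,
      show ((1:ZMod 2)).val = 1 from rfl]

/-- A linear map from an additive map over `ZMod 2`. -/
def addToLin {M N : Type*} [AddCommGroup M] [Module (ZMod 2) M] [AddCommGroup N]
    [Module (ZMod 2) N] (f : M → N) (hf : ∀ a b, f (a + b) = f a + f b) :
    M →ₗ[ZMod 2] N :=
  (AddMonoidHom.mk' f hf).toZModLinearMap 2

@[simp] lemma addToLin_apply {M N : Type*} [AddCommGroup M] [Module (ZMod 2) M] [AddCommGroup N]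
    [Module (ZMod 2) N] (f : M → N) (hf : ∀ a b, f (a + b) = f a + f b) (x : M) :
    addToLin f hf x = f x := rfl

/-- Existence of a quadratic refinement of an alternating bilinear form over `ZMod 2`. -/
lemma exists_ref {H : Type*} [AddCommGroup H] [Module (ZMod 2) H] [Fintype H]
    (B : H → H → ZMod 2)
    (hBl : ∀ a b c : H, B (a + b) c = B a c + B b c)
    (hBr : ∀ a b c : H, B a (b + c) = B a b + B a c)
    (halt : ∀ a : H, B a a = 0) :
    ∃ q : H → ZMod 2, ∀ a b : H, q (a + b) = q a + q b + B a b := by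
  have hsym : ∀ a c : H, B a c = B c a := by
    intro a c
    have h0 := halt (a + c)
    rw [hBl, hBr, hBr, halt, halt, zero_add, add_zero] at h0
    calc B a c = B a c + (B c a + B c a) := by rw [zmod2_add_self, add_zero]
    _ = (B a c + B c a) + B c a := by rw [add_assoc]
    _ = B c a := by rw [h0, zero_add]
  let L : H →ₗ[ZMod 2] H →ₗ[ZMod 2] ZMod 2 :=
    addToLin (fun a => addToLin (B a) (hBr a))
      (by intro a b; apply LinearMap.ext; intro x; simp [hBl])
  have : FiniteDimensional (ZMod 2) H := Module.Finite.of_finite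
  let b := Module.finBasis (ZMod 2) H
  let C : H →ₗ[ZMod 2] H →ₗ[ZMod 2] ZMod 2 :=
    b.constr (ZMod 2) (fun i => b.constr (ZMod 2) (fun j =>
      if i < j then B (b i) (b j) else 0))
  have key : ∀ a c : H, C a c + C c a = B a c := by
    have : C + C.flip = L := by
      apply Module.Basis.ext b; intro i; apply Module.Basis.ext b; intro j
      simp only [LinearMap.add_apply, LinearMap.flip_apply, C, Module.Basis.constr_basis, L,
        addToLin_apply]
      rcases lt_trichotomy i j with h|h|h
      · simp [h, not_lt.mpr h.le]
      · subst h; simp [halt]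
      · simp [h, not_lt.mpr h.le, hsym (b j) (b i)]
    intro a c
    have := congrFun (congrArg
      (fun (f : H →ₗ[ZMod 2] H →ₗ[ZMod 2] ZMod 2) => fun x y => f x y) this) a
    have := congrFun this c
    simpa [L] using this
  refine ⟨fun x => C x x, ?_⟩
  intro a c
  have : C (a + c) (a + c) = C a a + C a c + (C c a + C c c) := by
    simp [map_add, LinearMap.add_apply]; abel
  show C (a+c) (a+c) = C a a + C c c + B a c
  rw [this, ← key a c]; abel

/-- The number of quadratic refinements equals the cardinality of `H`. -/
lemma card_ref {H : Type*} [AddCommGroup H] [Module (ZMod 2) H] [Fintype H] [DecidableEq H]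
    (B : H → H → ZMod 2)
    (hBl : ∀ a b c : H, B (a + b) c = B a c + B b c)
    (hBr : ∀ a b c : H, B a (b + c) = B a b + B a c)
    (halt : ∀ a : H, B a a = 0) :
    (Finset.univ.filter
      (fun q : H → ZMod 2 => ∀ a b : H, q (a + b) = q a + q b + B a b)).card
      = Fintype.card H := by
  obtain ⟨q0, hq0⟩ := exists_ref B hBl hBr halt
  set S := Finset.univ.filter
      (fun q : H → ZMod 2 => ∀ a b : H, q (a + b) = q a + q b + B a b) with hS
  have hadd : ∀ q ∈ S, ∀ a c : H, (fun x => q x + q0 x) (a + c)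
      = (fun x => q x + q0 x) a + (fun x => q x + q0 x) c := by
    intro q hq a c
    have hq' := (Finset.mem_filter.mp hq).2
    simp only []
    rw [hq' a c, hq0 a c]
    have : ∀ x y z w v : ZMod 2, x + y + v + (z + w + v) = (x + z) + (y + w) := by decide
    exact this _ _ _ _ _
  let e : {q // q ∈ S} ≃ (H →ₗ[ZMod 2] ZMod 2) :=
    { toFun := fun q => addToLin (fun x => q.1 x + q0 x) (hadd q.1 q.2)
      invFun := fun ℓ => ⟨fun x => ℓ x + q0 x, by
        simp only [hS, Finset.mem_filter, Finset.mem_univ, true_and]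
        intro a c
        rw [map_add, hq0 a c]
        have : ∀ x y z w v : ZMod 2, (x + y) + (z + w + v) = x + z + (y + w) + v := by decide
        exact this _ _ _ _ _⟩
      left_inv := by
        intro q; apply Subtype.ext; funext x
        simp [add_assoc, zmod2_add_self]
      right_inv := by
        intro ℓ; apply LinearMap.ext; intro x
        simp [add_assoc, zmod2_add_self] }
  have : FiniteDimensional (ZMod 2) H := Module.Finite.of_finite
  let b := Module.finBasis (ZMod 2) H
  have h1 : S.card = Nat.card {q // q ∈ S} := by
    rw [Nat.card_eq_fintype_card, Fintype.card_coe]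
  rw [h1, Nat.card_congr e, Nat.card_congr (b.constr (ZMod 2)).toEquiv.symm,
    Nat.card_eq_fintype_card, Module.card_fintype b]
  simp [ZMod.card]

/-- Let `H` be a finite-dimensional `ℤ/2`-vector space with a
nondegenerate alternating bilinear form `B`, and for each quadratic form `q` refining
`B` let `Arf q ∈ ℤ/2` be defined by `(-1)^{Arf q} = |H|^{-1/2} Σ_{α∈H} (-1)^{q α}`.
Then for every `α ∈ H`, `|H|^{-1/2} · Σ_q (-1)^{Arf q + q α} = 1`, the sum running over
all quadratic forms `q` refining `B`. -/
theorem statement2 {H : Type*} [AddCommGroup H] [Module (ZMod 2) H] [Fintype H]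
    [DecidableEq H]
    (B : H → H → ZMod 2)
    (hBl : ∀ a b c : H, B (a + b) c = B a c + B b c)
    (hBr : ∀ a b c : H, B a (b + c) = B a b + B a c)
    (halt : ∀ a : H, B a a = 0)
    (hnd : ∀ a : H, (∀ b : H, B a b = 0) → a = 0)
    (Arf : (H → ZMod 2) → ZMod 2)
    (hArf : ∀ q : H → ZMod 2, (∀ a b : H, q (a + b) = q a + q b + B a b) →
      (-1 : ℝ) ^ ((Arf q).val) =
        (Real.sqrt (Fintype.card H))⁻¹ * ∑ a : H, (-1 : ℝ) ^ ((q a).val))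
    (α : H) :
    (Real.sqrt (Fintype.card H))⁻¹ *
      ∑ q ∈ Finset.univ.filter
          (fun q : H → ZMod 2 => ∀ a b : H, q (a + b) = q a + q b + B a b),
        (-1 : ℝ) ^ ((Arf q + q α).val)
    = 1 := by
  set s : ℝ := Real.sqrt (Fintype.card H) with hsdef
  set S := Finset.univ.filter
      (fun q : H → ZMod 2 => ∀ a b : H, q (a + b) = q a + q b + B a b) with hSdef
  have hcard : (0:ℝ) < Fintype.card H := by
    exact_mod_cast Fintype.card_pos
  have hs2 : s * s = Fintype.card H := Real.mul_self_sqrt hcard.le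
  have hmem : ∀ q ∈ S, ∀ a b : H, q (a + b) = q a + q b + B a b := by
    intro q hq; exact (Finset.mem_filter.mp hq).2
  have hq00 : ∀ q ∈ S, q 0 = 0 := by
    intro q hq
    have h := hmem q hq 0 0
    rw [add_zero, halt] at h
    rw [h, add_zero, zmod2_add_self]
  have haddself : ∀ x : H, x + x = 0 := by
    intro x
    rw [← one_smul (ZMod 2) x, ← add_smul, show ((1:ZMod 2)+1) = 0 from rfl, zero_smul]
  -- the inner sum over refinements vanishes for β ≠ 0
  have hinner : ∀ β : H, β ≠ 0 → ∑ q ∈ S, (-1:ℝ)^((q β).val) = 0 := by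
    intro β hβ
    obtain ⟨c, hc⟩ : ∃ c, B β c ≠ 0 := by
      by_contra h
      push_neg at h
      exact hβ (hnd β h)
    have hc1 : B β c = 1 := (zmod2_cases (B β c)).resolve_left hc
    apply Finset.sum_involution (fun q _ => fun x => q x + B x c)
    · intro q hq
      show (-1:ℝ)^((q β).val) + (-1:ℝ)^((q β + B β c).val) = 0
      rw [hc1, pow_val_add]
      norm_num [show ((1:ZMod 2)).val = 1 from rfl]
    · intro q hq h heq
      have h2 := congrFun heq β
      simp only [hc1] at h2
      exact zmod2_one_ne (q β) h2
    · intro q hq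
      simp only [hSdef, Finset.mem_filter, Finset.mem_univ, true_and]
      intro a b
      show q (a+b) + B (a+b) c = (q a + B a c) + (q b + B b c) + B a b
      rw [hmem q hq a b, hBl]
      exact zmod2_r2 _ _ _ _ _
    · intro q hq
      funext x
      simp [add_assoc, zmod2_add_self]
  have main : ∑ q ∈ S, (-1:ℝ)^((Arf q + q α).val) = s⁻¹ * (Fintype.card H) := by
    have step1 : ∀ q ∈ S, (-1:ℝ)^((Arf q + q α).val)
        = s⁻¹ * ∑ a : H, (-1:ℝ)^((B a α).val) * (-1:ℝ)^((q (a + α)).val) := by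
      intro q hq
      rw [pow_val_add, hArf q (hmem q hq), mul_assoc, Finset.sum_mul]
      congr 1
      apply Finset.sum_congr rfl
      intro a _
      rw [← pow_val_add, ← pow_val_add]
      congr 2
      rw [hmem q hq a α]
      exact zmod2_r1 (q a) (q α) (B a α)
    rw [Finset.sum_congr rfl step1, ← Finset.mul_sum]
    congr 1
    rw [Finset.sum_comm]
    have step2 : ∀ a : H, ∑ q ∈ S, (-1:ℝ)^((B a α).val) * (-1:ℝ)^((q (a + α)).val)
        = (-1:ℝ)^((B a α).val) * ∑ q ∈ S, (-1:ℝ)^((q (a + α)).val) := by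
      intro a; rw [Finset.mul_sum]
    rw [Finset.sum_congr rfl (fun a _ => step2 a)]
    rw [Finset.sum_eq_single α]
    · rw [halt, haddself]
      have : ∑ q ∈ S, (-1:ℝ)^((q 0).val) = S.card := by
        rw [Finset.sum_congr rfl (fun q hq => by rw [hq00 q hq])]
        simp [show ((0:ZMod 2)).val = 0 from rfl]
      rw [this, hSdef, card_ref B hBl hBr halt]
      simp [show ((0:ZMod 2)).val = 0 from rfl]
    · intro a _ ha
      have : a + α ≠ 0 := by
        intro h
        apply ha
        have := congrArg (· + α) h
        simpa [add_assoc, haddself] using this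
      rw [hinner _ this, mul_zero]
    · intro h
      exact absurd (Finset.mem_univ α) h
  rw [main, ← mul_assoc, ← mul_inv, hs2, inv_mul_cancel₀ (ne_of_gt hcard)]
end

section
/- Van der Waerden's identity: for a finite graph G with real interaction constants J_e on edges and inverse temperature β ≥ 0, the Ising partition function Σ_{σ ∈ {±1}^{V(G)}} exp[β Σ_{{u,v} ∈ E(G)} J_{u,v} σ_u σ_v] equals 2^{|V(G)|} · (Π_{e ∈ E(G)} cosh(β J_e)) · Σ_{P ∈ E(G)_even} Π_{e ∈ P} tanh(β J_e), where E(G)_even denotes the set of even subgraphs of G (edge sets in which every vertex has even degree). -/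
open scoped Classical

open Finset

/-- **van der Waerden's identity.** For a finite graph `G` (vertex type `V`,
edge index type `F` with endpoint map `ends`, each edge having two distinct endpoints),
interaction constants `J` and inverse temperature `β ≥ 0`, the Ising partition function
`Σ_{σ ∈ {±1}^V} exp[β Σ_e J_e σ_u σ_v]` equals
`2^{|V|} · (Π_e cosh(β J_e)) · Σ_{P even subgraph} Π_{e∈P} tanh(β J_e)`. -/
theorem statement4 {V F : Type*} [Fintype V] [DecidableEq V] [Fintype F]
    (ends : F → V × V) (hloop : ∀ f : F, (ends f).1 ≠ (ends f).2)
    (J : F → ℝ) (β : ℝ) (hβ : 0 ≤ β) :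
    ∑ σ : V → Bool,
        Real.exp (β * ∑ f : F, J f * (if σ (ends f).1 then (1 : ℝ) else -1) *
          (if σ (ends f).2 then (1 : ℝ) else -1))
    = 2 ^ (Fintype.card V) * (∏ f : F, Real.cosh (β * J f)) *
        ∑ P ∈ Finset.univ.filter (fun P : Finset F => ∀ v : V,
            Even ((P.filter (fun f => (ends f).1 = v)).card +
              (P.filter (fun f => (ends f).2 = v)).card)),
          ∏ f ∈ P, Real.tanh (β * J f) := by
  classical
  set s : Bool → ℝ := fun b => if b then (1 : ℝ) else -1 with hsdef
  have hs1 : ∀ b, s b = 1 ∨ s b = -1 := by intro b; cases b <;> simp [s]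
  -- per-edge identity
  have key : ∀ (σ : V → Bool) (f : F),
      Real.exp (β * (J f * s (σ (ends f).1) * s (σ (ends f).2)))
        = s (σ (ends f).1) * s (σ (ends f).2) * Real.sinh (β * J f)
          + Real.cosh (β * J f) := by
    intro σ f
    cases h1 : σ (ends f).1 <;> cases h2 : σ (ends f).2 <;>
      simp only [s, if_true, if_false, Bool.false_eq_true] <;> ring_nf <;>
      first
        | (rw [← Real.cosh_sub_sinh]; ring)
        | (rw [← Real.cosh_add_sinh]; ring)
  have step1 : ∀ σ : V → Bool,
      Real.exp (β * ∑ f : F, J f * s (σ (ends f).1) * s (σ (ends f).2))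
        = ∏ f : F, (s (σ (ends f).1) * s (σ (ends f).2) * Real.sinh (β * J f)
            + Real.cosh (β * J f)) := by
    intro σ
    rw [Finset.mul_sum, Real.exp_sum]
    exact Finset.prod_congr rfl fun f _ => key σ f
  -- fiberwise rewriting of the sign product
  have hfiber : ∀ (P : Finset F) (σ : V → Bool),
      (∏ f ∈ P, s (σ (ends f).1) * s (σ (ends f).2))
        = ∏ v : V, s (σ v) ^ ((P.filter (fun f => (ends f).1 = v)).card +
            (P.filter (fun f => (ends f).2 = v)).card) := by
    intro P σ
    rw [Finset.prod_mul_distrib]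
    have h1 : ∏ f ∈ P, s (σ (ends f).1)
        = ∏ v : V, s (σ v) ^ (P.filter (fun f => (ends f).1 = v)).card := by
      rw [← Finset.prod_fiberwise_of_maps_to
        (fun f _ => Finset.mem_univ ((ends f).1)) (fun f => s (σ (ends f).1))]
      refine Finset.prod_congr rfl fun v _ => ?_
      rw [Finset.prod_congr rfl (fun f hf => by
          rw [(Finset.mem_filter.mp hf).2]), Finset.prod_const]
    have h2 : ∏ f ∈ P, s (σ (ends f).2)
        = ∏ v : V, s (σ v) ^ (P.filter (fun f => (ends f).2 = v)).card := by
      rw [← Finset.prod_fiberwise_of_maps_to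
        (fun f _ => Finset.mem_univ ((ends f).2)) (fun f => s (σ (ends f).2))]
      refine Finset.prod_congr rfl fun v _ => ?_
      rw [Finset.prod_congr rfl (fun f hf => by
          rw [(Finset.mem_filter.mp hf).2]), Finset.prod_const]
    rw [h1, h2, ← Finset.prod_mul_distrib]
    exact Finset.prod_congr rfl fun v _ => (pow_add _ _ _).symm
  -- the sum over spin configurations of the sign product
  have hcount : ∀ P : Finset F,
      (∑ σ : V → Bool, ∏ f ∈ P, s (σ (ends f).1) * s (σ (ends f).2))
        = if (∀ v : V, Even ((P.filter (fun f => (ends f).1 = v)).card +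
            (P.filter (fun f => (ends f).2 = v)).card)) then
            (2 : ℝ) ^ (Fintype.card V) else 0 := by
    intro P
    set d : V → ℕ := fun v => (P.filter (fun f => (ends f).1 = v)).card +
      (P.filter (fun f => (ends f).2 = v)).card with hd
    have : (∑ σ : V → Bool, ∏ f ∈ P, s (σ (ends f).1) * s (σ (ends f).2))
        = ∏ v : V, ∑ b : Bool, s b ^ d v := by
      rw [Finset.prod_univ_sum]
      rw [← Fintype.piFinset_univ]
      exact Finset.sum_congr rfl fun σ _ => hfiber P σ
    rw [this]
    have hb : ∀ n : ℕ, (∑ b : Bool, s b ^ n) = 1 + (-1 : ℝ) ^ n := by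
      intro n; simp [s]
    by_cases h : ∀ v : V, Even (d v)
    · rw [if_pos h]
      have : ∀ v : V, (∑ b : Bool, s b ^ d v) = 2 := by
        intro v; rw [hb, (h v).neg_one_pow]; norm_num
      rw [Finset.prod_congr rfl fun v _ => this v, Finset.prod_const,
        Finset.card_univ]
    · rw [if_neg h]
      push_neg at h
      obtain ⟨v, hv⟩ := h
      refine Finset.prod_eq_zero (Finset.mem_univ v) ?_
      rw [hb, (Nat.not_even_iff_odd.mp hv).neg_one_pow]; ring
  -- put everything together
  have hgoal1 : ∀ (b : Bool), (if b then (1 : ℝ) else -1) = s b := fun b => rfl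
  simp only [hgoal1]
  calc
    ∑ σ : V → Bool, Real.exp (β * ∑ f : F, J f * s (σ (ends f).1) * s (σ (ends f).2))
        = ∑ σ : V → Bool, ∑ P ∈ (Finset.univ : Finset F).powerset,
            (∏ f ∈ P, s (σ (ends f).1) * s (σ (ends f).2) * Real.sinh (β * J f)) *
              ∏ f ∈ Finset.univ \ P, Real.cosh (β * J f) := by
          exact Finset.sum_congr rfl fun σ _ => by
            rw [step1 σ, Finset.prod_add]
    _ = ∑ P ∈ (Finset.univ : Finset F).powerset,
          ((∏ f ∈ P, Real.sinh (β * J f)) * ∏ f ∈ Finset.univ \ P, Real.cosh (β * J f)) *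
            ∑ σ : V → Bool, ∏ f ∈ P, s (σ (ends f).1) * s (σ (ends f).2) := by
          rw [Finset.sum_comm]
          refine Finset.sum_congr rfl fun P _ => ?_
          rw [Finset.mul_sum]
          refine Finset.sum_congr rfl fun σ _ => ?_
          rw [Finset.prod_mul_distrib]
          ring
    _ = ∑ P ∈ (Finset.univ : Finset F).powerset,
          ((∏ f ∈ P, Real.sinh (β * J f)) * ∏ f ∈ Finset.univ \ P, Real.cosh (β * J f)) *
            (if (∀ v : V, Even ((P.filter (fun f => (ends f).1 = v)).card +
              (P.filter (fun f => (ends f).2 = v)).card)) then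
              (2 : ℝ) ^ (Fintype.card V) else 0) :=
          Finset.sum_congr rfl fun P _ => by rw [hcount P]
    _ = 2 ^ (Fintype.card V) * (∏ f : F, Real.cosh (β * J f)) *
          ∑ P ∈ Finset.univ.filter (fun P : Finset F => ∀ v : V,
              Even ((P.filter (fun f => (ends f).1 = v)).card +
                (P.filter (fun f => (ends f).2 = v)).card)),
            ∏ f ∈ P, Real.tanh (β * J f) := by
          rw [Finset.powerset_univ]
          rw [Finset.mul_sum, Finset.sum_filter]
          refine Finset.sum_congr rfl fun P _ => ?_
          by_cases h : ∀ v : V, Even ((P.filter (fun f => (ends f).1 = v)).card +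
              (P.filter (fun f => (ends f).2 = v)).card)
          · rw [if_pos h, if_pos h]
            have hcoshP : (∏ f : F, Real.cosh (β * J f))
                = (∏ f ∈ P, Real.cosh (β * J f)) *
                  ∏ f ∈ Finset.univ \ P, Real.cosh (β * J f) :=
              (Finset.prod_sdiff (Finset.subset_univ P)).symm.trans (mul_comm _ _)
            have hsinh : ∀ f : F, Real.cosh (β * J f) * Real.tanh (β * J f)
                = Real.sinh (β * J f) := by
              intro f
              rw [Real.tanh_eq_sinh_div_cosh,
                mul_div_cancel₀ _ ((Real.cosh_pos _).ne')]
            have hPP : (∏ f ∈ P, Real.sinh (β * J f))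
                = (∏ f ∈ P, Real.cosh (β * J f)) * ∏ f ∈ P, Real.tanh (β * J f) := by
              rw [← Finset.prod_mul_distrib]
              exact Finset.prod_congr rfl fun f _ => (hsinh f).symm
            rw [hPP, hcoshP]; ring
          · rw [if_neg h, if_neg h]; ring
end

section
/- Let KW(G,x) = I - T be the Kac–Ward matrix of a planar weighted graph, let J be the permutation matrix J_{e,e'} = δ_{ē,e'} exchanging each oriented edge with its reversal, and set K = J·KW(G,x). Then K is self-adjoint: K* = K. -/
open scoped Classical
open Matrix

noncomputable section

variable {V F : Type*}

/-- Origin (tail) of an oriented edge `(f, b)` of the graph with endpoint map `ends`. -/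
def oTail (ends : F → V × V) (p : F × Bool) : V :=
  if p.2 then (ends p.1).1 else (ends p.1).2

/-- Head (terminal vertex) of an oriented edge. -/
def oHead (ends : F → V × V) (p : F × Bool) : V :=
  if p.2 then (ends p.1).2 else (ends p.1).1

/-- Reversal of an oriented edge. -/
def oRev (p : F × Bool) : F × Bool := (p.1, !p.2)

/-- Direction (as a complex number) of an oriented edge in the straight-line drawing
given by the vertex positions `pos`. -/
def oDir (ends : F → V × V) (pos : V → ℂ) (p : F × Bool) : ℂ :=
  pos (oHead ends p) - pos (oTail ends p)

/-- The angle (argument of the direction) of an oriented edge. -/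
def oAng (ends : F → V × V) (pos : V → ℂ) (p : F × Bool) : ℝ :=
  Complex.arg (oDir ends pos p)

/-- A dimer configuration (perfect matching) on the terminal graph `G^K`: a fixed-point
free involution of the oriented edges of `G`, matching each oriented edge either to its
reversal (a "long" dimer) or to another oriented edge with the same origin
(a "short" dimer). -/
def IsTerminalMatching (ends : F → V × V) (m : F × Bool → F × Bool) : Prop :=
  Function.Involutive m ∧ (∀ p, m p ≠ p) ∧
    ∀ p, m p = oRev p ∨ oTail ends (m p) = oTail ends p

/-- An even subgraph: a set of edges in which every vertex has even degree. -/
def IsEvenSubgraph [Fintype F] [DecidableEq V] (ends : F → V × V) (P : Finset F) :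
    Prop :=
  ∀ v : V, Even ((P.filter (fun f => (ends f).1 = v)).card +
    (P.filter (fun f => (ends f).2 = v)).card)

/-- The weight `x^K(D)` of a dimer configuration: long edges have weight `1` and the
short edge joining `e, e'` has weight `(x_e x_{e'})^{1/2}`. -/
def matchWeight [Fintype F] (x : F → ℝ) (m : F × Bool → F × Bool) : ℝ :=
  ∏ p ∈ Finset.univ.filter (fun p : F × Bool => m p ≠ oRev p), Real.sqrt (x p.1)

/-- `p` is the endpoint of a short dimer of `m` with the smaller angle. -/
def isLow (ends : F → V × V) (pos : V → ℂ) (m : F × Bool → F × Bool)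
    (p : F × Bool) : Prop :=
  m p ≠ oRev p ∧ oAng ends pos p < oAng ends pos (m p)

/-- The number `t(D)` of pairs of (short) dimers of `m` that cross in the drawing:
two chords at the same vertex cross iff their angles interleave in the cyclic order. -/
def selfCross [Fintype F] (ends : F → V × V) (pos : V → ℂ)
    (m : F × Bool → F × Bool) : ℕ :=
  (Finset.univ.filter (fun pr : (F × Bool) × (F × Bool) =>
    isLow ends pos m pr.1 ∧ isLow ends pos m pr.2 ∧
    oTail ends pr.1 = oTail ends pr.2 ∧
    oAng ends pos pr.1 < oAng ends pos pr.2 ∧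
    oAng ends pos pr.2 < oAng ends pos (m pr.1) ∧
    oAng ends pos (m pr.1) < oAng ends pos (m pr.2))).card

/-- The Kac–Ward transition matrix `T`, indexed by oriented edges:
`T_{e,e'} = exp((i/2)·w(e,e'))·(x_e x_{e'})^{1/2}` if `t(e) = o(e')` and `e' ≠ ē`,
and `0` otherwise, where `w(e,e') ∈ (-π,π)` is the turning angle from `e` to `e'`. -/
def KWT [DecidableEq V] [DecidableEq F] (ends : F → V × V) (pos : V → ℂ)
    (x : F → ℝ) : Matrix (F × Bool) (F × Bool) ℂ :=
  Matrix.of fun e e' =>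
    if oHead ends e = oTail ends e' ∧ e' ≠ oRev e then
      Complex.exp (Complex.I *
          ((Complex.arg (oDir ends pos e' / oDir ends pos e) / 2 : ℝ) : ℂ)) *
        ((Real.sqrt (x e.1 * x e'.1) : ℝ) : ℂ)
    else 0

/-- The Kac–Ward matrix `KW(G,x) = I - T`. -/
def KacWard [DecidableEq V] [DecidableEq F] (ends : F → V × V) (pos : V → ℂ)
    (x : F → ℝ) : Matrix (F × Bool) (F × Bool) ℂ :=
  1 - KWT ends pos x

/-- The permutation matrix `J` exchanging each oriented edge with its reversal. -/
def revMat (F : Type*) [DecidableEq F] : Matrix (F × Bool) (F × Bool) ℂ :=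
  Matrix.of fun e e' => if e' = oRev e then 1 else 0

/-!
Off the entries pairing an edge with its reversal, `K_{e,e'} = -T_{ē,e'}` vanishes unless
`e ≠ e'` share their origin, and then its phase is half the argument of `d_{e'} / (-d_e)`, where
`d` is the direction of an oriented edge. The two quotients for `(e, e')` and `(e', e)` are
inverse to each other, so their arguments are opposite unless one of them is `π`. That happens
only if `e` and `e'` leave their common origin in the same direction, and then the two edges
overlap, which planarity forbids.
-/

theorem openSegment_inter_openSegment_nonempty_of_sub_eq_smul {𝕜 E : Type*} [Field 𝕜]
    [LinearOrder 𝕜] [IsStrictOrderedRing 𝕜] [AddCommGroup E] [Module 𝕜 E] {a b b' : E} {c : 𝕜}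
    (hc : 0 < c) (h : b - a = c • (b' - a)) :
    (openSegment 𝕜 a b ∩ openSegment 𝕜 a b').Nonempty := by
  obtain ⟨s, hs, hs1c⟩ := exists_between (lt_min one_pos hc)
  obtain ⟨hs1, hsc⟩ := lt_min_iff.1 hs1c
  refine ⟨a + s • (b' - a), ?_, ?_⟩
  · rw [openSegment_eq_image']
    refine ⟨s / c, ⟨div_pos hs hc, (div_lt_one hc).2 hsc⟩, ?_⟩
    simp only [h, smul_smul, div_mul_cancel₀ s hc.ne']
  · rw [openSegment_eq_image']
    exact ⟨s, ⟨hs, hs1⟩, rfl⟩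

section OrientedEdges

variable (ends : F → V × V) (pos : V → ℂ)

@[simp] lemma oRev_fst (p : F × Bool) : (oRev p).1 = p.1 := rfl

@[simp] lemma oRev_oRev (p : F × Bool) : oRev (oRev p) = p := by
  cases p with | mk f b => cases b <;> rfl

lemma oRev_involutive : Function.Involutive (oRev : F × Bool → F × Bool) := oRev_oRev

lemma eq_oRev_comm {p q : F × Bool} : p = oRev q ↔ q = oRev p :=
  eq_comm.trans oRev_involutive.eq_iff

@[simp] lemma oTail_oRev (p : F × Bool) : oTail ends (oRev p) = oHead ends p := by
  cases p with | mk f b => cases b <;> rfl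

@[simp] lemma oHead_oRev (p : F × Bool) : oHead ends (oRev p) = oTail ends p := by
  cases p with | mk f b => cases b <;> rfl

@[simp] lemma oDir_oRev (p : F × Bool) : oDir ends pos (oRev p) = -oDir ends pos p := by
  simp [oDir]

lemma eq_oRev_of_fst_eq {p q : F × Bool} (hne : p ≠ q) (h : p.1 = q.1) : q = oRev p := by
  obtain ⟨f, b⟩ := p
  obtain ⟨g, b'⟩ := q
  cases b <;> cases b' <;> simp_all [oRev]

lemma openSegment_oTail_oHead (p : F × Bool) :
    openSegment ℝ (pos (oTail ends p)) (pos (oHead ends p)) =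
      openSegment ℝ (pos (ends p.1).1) (pos (ends p.1).2) := by
  obtain ⟨f, b⟩ := p
  cases b
  · exact openSegment_symm ℝ _ _
  · rfl

/-- For `e' = ē` the quotient is `1` (or `0`); otherwise an argument `π` would make the two
edges leave their common origin in the same direction and overlap. -/
lemma arg_oDir_div_neg_oDir_ne_pi
    (hplanar : ∀ f g : F, f ≠ g → ∀ z : ℂ,
      z ∈ openSegment ℝ (pos (ends f).1) (pos (ends f).2) →
      z ∈ openSegment ℝ (pos (ends g).1) (pos (ends g).2) → False)
    {e e' : F × Bool} (hne : e ≠ e') (htail : oTail ends e = oTail ends e') :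
    Complex.arg (oDir ends pos e / -oDir ends pos e') ≠ Real.pi := by
  by_cases hfst : e.1 = e'.1
  · rw [eq_oRev_of_fst_eq hne hfst, oDir_oRev, neg_neg]
    rcases eq_or_ne (oDir ends pos e) 0 with hd | hd <;> simp [hd, Real.pi_ne_zero.symm]
  intro hpi
  set z := oDir ends pos e / -oDir ends pos e'
  obtain ⟨hre, him⟩ := Complex.arg_eq_pi_iff.1 hpi
  have hd' : oDir ends pos e' ≠ 0 := fun h0 => by simp [z, h0] at hre
  have hz : z = ((z.re : ℝ) : ℂ) := Complex.ext rfl (by simp [him])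
  have hdir : oDir ends pos e = ((-z.re : ℝ) : ℂ) * oDir ends pos e' := by
    rw [Complex.ofReal_neg, ← hz]
    simp only [z]
    field_simp
  have hpar : pos (oHead ends e) - pos (oTail ends e) =
      (-z.re) • (pos (oHead ends e') - pos (oTail ends e)) := by
    simpa only [oDir, htail, Complex.real_smul] using hdir
  obtain ⟨w, hw, hw'⟩ :=
    openSegment_inter_openSegment_nonempty_of_sub_eq_smul (neg_pos.2 hre) hpar
  rw [openSegment_oTail_oHead] at hw
  rw [htail, openSegment_oTail_oHead] at hw'
  exact hplanar e.1 e'.1 hfst w hw hw'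

end OrientedEdges

lemma revMat_mul_apply [Fintype F] [DecidableEq F]
    (A : Matrix (F × Bool) (F × Bool) ℂ) (e e' : F × Bool) :
    (revMat F * A) e e' = A (oRev e) e' := by
  simp [Matrix.mul_apply, revMat]

section KacWardEntries

variable [DecidableEq V] [DecidableEq F] (ends : F → V × V) (pos : V → ℂ) (x : F → ℝ)

lemma KWT_oRev_apply (e e' : F × Bool) :
    KWT ends pos x (oRev e) e' =
      if oTail ends e = oTail ends e' ∧ e' ≠ e then
        Complex.exp (Complex.I *
            ((Complex.arg (oDir ends pos e' / -oDir ends pos e) / 2 : ℝ) : ℂ)) *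
          ((Real.sqrt (x e.1 * x e'.1) : ℝ) : ℂ)
      else 0 := by
  simp [KWT]

lemma star_KWT_oRev_apply
    (hplanar : ∀ f g : F, f ≠ g → ∀ z : ℂ,
      z ∈ openSegment ℝ (pos (ends f).1) (pos (ends f).2) →
      z ∈ openSegment ℝ (pos (ends g).1) (pos (ends g).2) → False)
    (e e' : F × Bool) :
    star (KWT ends pos x (oRev e') e) = KWT ends pos x (oRev e) e' := by
  rw [KWT_oRev_apply, KWT_oRev_apply]
  by_cases h : oTail ends e = oTail ends e' ∧ e' ≠ e
  · rw [if_pos ⟨h.1.symm, Ne.symm h.2⟩, if_pos h]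
    have hinv : oDir ends pos e / -oDir ends pos e' =
        (oDir ends pos e' / -oDir ends pos e)⁻¹ := by
      rw [div_neg, div_neg, inv_neg, inv_div]
    have harg : Complex.arg (oDir ends pos e / -oDir ends pos e') =
        -Complex.arg (oDir ends pos e' / -oDir ends pos e) := by
      rw [hinv, Complex.arg_inv,
        if_neg (arg_oDir_div_neg_oDir_ne_pi ends pos hplanar h.2 h.1.symm)]
    rw [star_mul', Complex.star_def, ← Complex.exp_conj, harg, mul_comm (x e'.1)]
    simp only [map_mul, Complex.conj_I, Complex.conj_ofReal]
    push_cast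
    ring_nf
  · rw [if_neg (fun h' => h ⟨h'.1.symm, Ne.symm h'.2⟩), if_neg h, star_zero]

end KacWardEntries

theorem statement10_general [DecidableEq V] [Fintype F] [DecidableEq F]
    (ends : F → V × V) (pos : V → ℂ) (x : F → ℝ)
    (hplanar : ∀ f g : F, f ≠ g → ∀ z : ℂ,
      z ∈ openSegment ℝ (pos (ends f).1) (pos (ends f).2) →
      z ∈ openSegment ℝ (pos (ends g).1) (pos (ends g).2) → False) :
    (revMat F * KacWard ends pos x).conjTranspose = revMat F * KacWard ends pos x := by
  ext e e'
  rw [conjTranspose_apply, revMat_mul_apply, revMat_mul_apply, KacWard, Matrix.sub_apply,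
    Matrix.sub_apply, star_sub, star_KWT_oRev_apply ends pos x hplanar]
  simp [one_apply, oRev_involutive.eq_iff, eq_oRev_comm (p := e)]

/-- Let `KW(G,x) = I - T` be the Kac–Ward matrix of a planar weighted
graph, `J` the permutation matrix exchanging each oriented edge with its reversal, and
`K = J · KW(G,x)`. Then `K` is self-adjoint: `K* = K`. -/
theorem statement10 [Fintype V] [DecidableEq V] [Fintype F] [DecidableEq F]
    (ends : F → V × V) (pos : V → ℂ) (x : F → ℝ)
    (hx : ∀ f, 0 ≤ x f)
    (hinj : Function.Injective pos)
    (hloop : ∀ f : F, (ends f).1 ≠ (ends f).2)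
    (hplanar : ∀ f g : F, f ≠ g → ∀ z : ℂ,
      z ∈ openSegment ℝ (pos (ends f).1) (pos (ends f).2) →
      z ∈ openSegment ℝ (pos (ends g).1) (pos (ends g).2) → False)
    (hvert : ∀ (f : F) (v : V),
      pos v ∉ openSegment ℝ (pos (ends f).1) (pos (ends f).2)) :
    (revMat F * KacWard ends pos x).conjTranspose = revMat F * KacWard ends pos x :=
  statement10_general ends pos x hplanar
end
end

section
/- Let K̂ be an invertible real antisymmetric matrix indexed by the oriented edges of a finite graph, E = {e_1, ē_1, ..., e_n, ē_n} a set consisting of n edges together with their reversals, and Ĵ_E the real antisymmetric matrix supported on E with (Ĵ_E)_{e,ē} = i η_e η̄_ē (±1-valued) and zero elsewhere, satisfying -Ĵ_E² = identity on E. Then det(I - 2Ĵ_E K̂^{-1}) = det(Ĵ_E + 2K̂^{-1})_{E×E}, the determinant of the 2n×2n submatrix indexed by E. -/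
open Matrix

/-- Let `K̂` be an invertible real antisymmetric matrix indexed by a
finite set, `E` a subset of the index set, and `Ĵ_E` a real antisymmetric matrix
supported on the `E × E` block whose block squares to minus the identity
(`-Ĵ_E² = id` on `E`). Then `det(I - 2·Ĵ_E·K̂⁻¹) = det((Ĵ_E + 2·K̂⁻¹)_{E×E})`. -/
theorem statement12 {I : Type*} [Fintype I] [DecidableEq I]
    (Khat : Matrix I I ℝ) (hanti : Khat.transpose = -Khat) (hinv : IsUnit Khat.det)
    (E : Finset I)
    (Jm : Matrix I I ℝ) (hJanti : Jm.transpose = -Jm)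
    (hsupp : ∀ i j : I, (i ∉ E ∨ j ∉ E) → Jm i j = 0)
    (hJ2 : ∀ i ∈ E, ∀ j : I, (Jm * Jm) i j = if i = j then -1 else 0) :
    (1 - (2 : ℝ) • (Jm * Khat⁻¹)).det =
      ((Jm + (2 : ℝ) • Khat⁻¹).submatrix
        (fun p : {i : I // i ∈ E} => (p : I)) (fun p : {i : I // i ∈ E} => (p : I))).det := by
  classical
  set α := {i : I // i ∈ E}
  set c : α → I := fun p => (p : I) with hc
  set A : Matrix I I ℝ := Jm + (2 : ℝ) • Khat⁻¹ with hA
  set B : Matrix α α ℝ := Jm.submatrix c c with hBdef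
  have hsum : ∀ (f : I → ℝ), (∀ k, k ∉ E → f k = 0) →
      (∑ k, f k) = ∑ p : α, f (c p) := by
    intro f hf
    rw [← Finset.sum_subtype E (fun x => Iff.rfl) f]
    exact (Finset.sum_subset (Finset.subset_univ E) (fun x _ hx => hf x hx)).symm
  -- B * B = -1
  have hB2 : B * B = -1 := by
    ext p q
    have h1 : (B * B) p q = ∑ k : α, Jm (c p) (c k) * Jm (c k) (c q) := by
      simp [mul_apply, hBdef]
    have h2 : (∑ k, Jm (c p) k * Jm k (c q)) = ∑ k : α, Jm (c p) (c k) * Jm (c k) (c q) :=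
      hsum _ (fun k hk => by rw [hsupp (c p) k (Or.inr hk), zero_mul])
    have h3 : (Jm * Jm) (c p) (c q) = if (c p : I) = c q then -1 else 0 :=
      hJ2 (c p) p.2 (c q)
    have hcinj : ((c p : I) = c q) ↔ p = q := by
      constructor
      · intro h; exact Subtype.ext h
      · intro h; rw [h]
    rw [h1, ← h2, ← mul_apply, h3]
    by_cases h : p = q
    · simp [h, Matrix.neg_apply, Matrix.one_apply]
    · simp [h, hcinj, Matrix.neg_apply, Matrix.one_apply]
  -- det B = 1
  set m := Fintype.card α with hm
  have hsq : B.det * B.det = (-1 : ℝ) ^ m := by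
    rw [← Matrix.det_mul, hB2]
    have : (-1 : Matrix α α ℝ) = -(1 : Matrix α α ℝ) := by simp
    rw [this, Matrix.det_neg, Matrix.det_one, mul_one]
  have h2B : (1 + B) * (1 + B) = (2 : ℝ) • B := by
    have : (1 + B) * (1 + B) = 1 + B + B + B * B := by noncomm_ring
    rw [this, hB2, two_smul]
    abel
  have hnn : 0 ≤ (2 : ℝ) ^ m * B.det := by
    have := Matrix.det_smul B (2 : ℝ)
    rw [← this, ← h2B, Matrix.det_mul]
    exact mul_self_nonneg _
  have hBpos : 0 ≤ B.det := by
    have h2pos : (0 : ℝ) < 2 ^ m := by positivity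
    nlinarith
  have heven : Even m := by
    rcases Nat.even_or_odd m with h | h
    · exact h
    · exfalso
      rw [h.neg_one_pow] at hsq
      nlinarith [mul_self_nonneg B.det]
  have hdetB : B.det = 1 := by
    rw [heven.neg_one_pow] at hsq
    have : (B.det - 1) * (B.det + 1) = 0 := by nlinarith
    rcases mul_eq_zero.mp this with h | h
    · linarith
    · linarith
  -- block decomposition
  set M : Matrix I I ℝ := 1 - (2 : ℝ) • (Jm * Khat⁻¹) with hM
  set N : Matrix I I ℝ := (-Jm) * A with hN
  set β := {i : I // i ∉ E}
  set c' : β → I := fun p => (p : I) with hc'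
  have hrowE : ∀ i ∈ E, ∀ j, M i j = N i j := by
    intro i hi j
    have : N i j = -((Jm * Jm) i j) - 2 * (Jm * Khat⁻¹) i j := by
      simp [hN, hA, Matrix.mul_add, Matrix.neg_mul, Matrix.sub_apply, Matrix.neg_apply,
        Matrix.add_apply, Matrix.smul_apply, Matrix.mul_smul, smul_eq_mul]
      ring
    rw [this, hJ2 i hi j]
    simp [hM, Matrix.sub_apply, Matrix.smul_apply, Matrix.one_apply, smul_eq_mul]
    by_cases h : i = j <;> simp [h] <;> ring
  have hrowC : ∀ i, i ∉ E → ∀ j, M i j = if i = j then 1 else 0 := by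
    intro i hi j
    have hz : (Jm * Khat⁻¹) i j = 0 := by
      rw [mul_apply]
      exact Finset.sum_eq_zero fun k _ => by rw [hsupp i k (Or.inl hi), zero_mul]
    simp [hM, Matrix.sub_apply, Matrix.smul_apply, hz, Matrix.one_apply]
  set e : α ⊕ β ≃ I := Equiv.sumCompl (· ∈ E)
  have hMsub : M.submatrix e e =
      Matrix.fromBlocks (N.submatrix c c) (N.submatrix c c') 0 1 := by
    ext i j
    cases i with
    | inl i =>
      cases j with
      | inl j => exact hrowE (c i) i.2 (c j)
      | inr j => exact hrowE (c i) i.2 (c' j)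
    | inr i =>
      cases j with
      | inl j =>
        show M (c' i) (c j) = (0 : Matrix β α ℝ) i j
        rw [hrowC (c' i) i.2]
        have hne : (c' i : I) ≠ c j := by
          intro h; apply i.2; rw [show (i : I) = (j : I) from h]; exact j.2
        simp [hne]
      | inr j =>
        show M (c' i) (c' j) = (1 : Matrix β β ℝ) i j
        rw [hrowC (c' i) i.2]
        by_cases h : i = j
        · simp [h, Matrix.one_apply]
        · have hne : (c' i : I) ≠ c' j := fun hh => h (Subtype.ext hh)
          simp [hne, h, Matrix.one_apply]
  have hNsub : N.submatrix c c = (-B) * (A.submatrix c c) := by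
    ext p q
    rw [Matrix.submatrix_apply, hN, mul_apply, mul_apply]
    rw [hsum (fun k => (-Jm) (c p) k * A k (c q))
      (fun k hk => by simp [hsupp (c p) k (Or.inr hk)])]
    simp [hBdef]
  have key : M.det = (N.submatrix c c).det := by
    rw [← Matrix.det_submatrix_equiv_self e M, hMsub,
      Matrix.det_fromBlocks_zero₂₁, Matrix.det_one, mul_one]
  have hdetnegB : (-B).det = 1 := by
    rw [Matrix.det_neg, hdetB, mul_one, ← hm, heven.neg_one_pow]
  calc M.det = (N.submatrix c c).det := key
    _ = (-B).det * (A.submatrix c c).det := by rw [hNsub, Matrix.det_mul]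
    _ = (A.submatrix c c).det := by rw [hdetnegB, one_mul]
end

section
/- Let G be a finite graph embedded in a closed orientable surface Σ of genus g so that the complement is a union of disks. For each homology class α ∈ H_1(Σ; Z/2) let Z_α(G,x) = Σ_{P even subgraph, [P]=α} x(P). Then for any quadratic form q on (H_1(Σ;Z/2), intersection form), the twisted sum Σ_{α} (-1)^{q(α)} Z_α(G,x) and the full high-temperature polynomial satisfy: Z_high(G,x) = 2^{-g} Σ_q (-1)^{Arf(q)} Σ_α (-1)^{q(α)} Z_α(G,x), where the outer sum ranges over all 2^{2g} quadratic forms q refining the intersection form. -/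
open scoped Classical

/-!
Expanding `(-1)^{Arf q} = 2^{-g} ∑_b (-1)^{q b}` and using `q b + q α = q (b + α) + B b α`, the
coefficient of `Z_α` becomes `2^{-2g} ∑_b (-1)^{B b α} ∑_q (-1)^{q (b + α)}`. The refinements of
`B` form a torsor under `Hom(H, ℤ/2)`, so the inner sum over `q` vanishes unless `b = α`, where it
counts all `2^{2g}` refinements; as `B α α = 0`, every coefficient is `1`. Refinements exist
because an alternating form is `C - Cᵀ` for its strictly upper triangular part `C` in a basis,
and `x ↦ C x x` then refines it.
-/

theorem LinearMap.BilinForm.IsAlt.exists_sub_flip_eq {R M ι : Type*} [CommRing R]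
    [AddCommGroup M] [Module R M] [LinearOrder ι] (b : Module.Basis ι R M)
    {B : LinearMap.BilinForm R M} (hB : B.IsAlt) :
    ∃ C : LinearMap.BilinForm R M, C - C.flip = B := by
  refine ⟨b.constr R fun i => b.constr R fun j => if i < j then B (b i) (b j) else 0, ?_⟩
  refine LinearMap.ext_basis b b fun i j => ?_
  simp only [LinearMap.sub_apply, Module.Basis.constr_basis]
  rcases lt_trichotomy i j with h | rfl | h
  · simp [h, h.not_gt]
  · simp [hB.self_eq_zero]
  · simp [h, h.not_gt, ← hB.neg_eq (b j) (b i)]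

theorem ZMod.neg_one_pow_val_add (x y : ZMod 2) :
    (-1 : ℝ) ^ (x + y).val = (-1) ^ x.val * (-1) ^ y.val := by
  rw [ZMod.val_add, ← neg_one_pow_eq_pow_mod_two, pow_add]

theorem Finset.sum_mul_sum_fiberwise {ι κ R : Type*} [Fintype ι] [Fintype κ] [DecidableEq κ]
    [CommSemiring R] (f : κ → R) (g : ι → κ) (w : ι → R) :
    ∑ a, f a * ∑ i ∈ Finset.univ.filter (fun i => g i = a), w i = ∑ i, f (g i) * w i := by
  rw [← Finset.sum_fiberwise Finset.univ g fun i => f (g i) * w i]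
  refine Finset.sum_congr rfl fun a _ => ?_
  rw [Finset.mul_sum]
  exact Finset.sum_congr rfl fun i hi => by rw [(Finset.mem_filter.mp hi).2]

section QuadraticRefinement

variable {H : Type*} [AddCommGroup H] {B : H → H → ZMod 2}

def IsQuadraticRefinement (B : H → H → ZMod 2) (q : H → ZMod 2) : Prop :=
  ∀ a b : H, q (a + b) = q a + q b + B a b

theorem IsQuadraticRefinement.map_zero (halt : ∀ a : H, B a a = 0) {q : H → ZMod 2}
    (hq : IsQuadraticRefinement B q) : q 0 = 0 := by
  simpa [halt] using hq 0 0

theorem IsQuadraticRefinement.add_addMonoidHom {q : H → ZMod 2}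
    (hq : IsQuadraticRefinement B q) (φ : H →+ ZMod 2) : IsQuadraticRefinement B (q + φ) := by
  intro a b
  simp only [Pi.add_apply, hq a b, map_add]
  ring

def IsQuadraticRefinement.subAddMonoidHom {q q' : H → ZMod 2}
    (hq : IsQuadraticRefinement B q) (hq' : IsQuadraticRefinement B q') : H →+ ZMod 2 :=
  AddMonoidHom.mk' (q - q') fun a b => by simp only [Pi.sub_apply, hq a b, hq' a b]; ring

theorem exists_isQuadraticRefinement [Module (ZMod 2) H] [Finite H]
    (hBl : ∀ a b c : H, B (a + b) c = B a c + B b c)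
    (hBr : ∀ a b c : H, B a (b + c) = B a b + B a c) (halt : ∀ a : H, B a a = 0) :
    ∃ q, IsQuadraticRefinement B q := by
  let Bₗ : LinearMap.BilinForm (ZMod 2) H :=
    LinearMap.mk₂ (ZMod 2) B hBl
      (fun r a b => ZMod.map_smul (AddMonoidHom.mk' (B · b) (hBl · · b)) r a) hBr
      (fun r a b => ZMod.map_smul (AddMonoidHom.mk' (B a) (hBr a)) r b)
  have : Module.Finite (ZMod 2) H := Module.Finite.of_finite
  obtain ⟨C, hC⟩ := LinearMap.BilinForm.IsAlt.exists_sub_flip_eq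
    (Module.finBasis (ZMod 2) H) (B := Bₗ) halt
  refine ⟨fun x => C x x, fun a b => ?_⟩
  have hab : C a b - C b a = B a b := congr($hC a b)
  simp only [map_add, LinearMap.add_apply, ← hab, sub_eq_add_neg, ZMod.neg_eq_self_mod_two]
  ring

variable [Fintype H] [DecidableEq H]

variable (B) in
def quadraticRefinements : Finset (H → ZMod 2) :=
  Finset.univ.filter fun q : H → ZMod 2 => ∀ a b : H, q (a + b) = q a + q b + B a b

theorem mem_quadraticRefinements {q : H → ZMod 2} :
    q ∈ quadraticRefinements B ↔ IsQuadraticRefinement B q := by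
  simp [quadraticRefinements, IsQuadraticRefinement]

variable [Module (ZMod 2) H]

theorem card_quadraticRefinements {q₀ : H → ZMod 2} (hq₀ : IsQuadraticRefinement B q₀) :
    (quadraticRefinements B).card = Fintype.card H := by
  have : Module.Finite (ZMod 2) H := Module.Finite.of_finite
  let e : quadraticRefinements B ≃ (H →+ ZMod 2) :=
    { toFun q := (mem_quadraticRefinements.mp q.2).subAddMonoidHom hq₀
      invFun φ := ⟨q₀ + φ, mem_quadraticRefinements.mpr (hq₀.add_addMonoidHom φ)⟩
      left_inv q := by ext; simp [IsQuadraticRefinement.subAddMonoidHom]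
      right_inv φ := by ext; simp [IsQuadraticRefinement.subAddMonoidHom] }
  rw [← Nat.card_eq_finsetCard, Nat.card_congr e,
    Nat.card_congr (AddMonoidHom.toZModLinearMapEquiv 2).toEquiv,
    ← Nat.card_congr (Module.finBasis (ZMod 2) H).toDualEquiv.toEquiv, Nat.card_eq_fintype_card]

theorem sum_quadraticRefinements_neg_one_pow (halt : ∀ a : H, B a a = 0) (c : H) :
    ∑ q ∈ quadraticRefinements B, (-1 : ℝ) ^ (q c).val =
      if c = 0 then ((quadraticRefinements B).card : ℝ) else 0 := by
  split_ifs with hc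
  · rw [Finset.card_eq_sum_ones, Nat.cast_sum]
    refine Finset.sum_congr rfl fun q hq => ?_
    simp [hc, (mem_quadraticRefinements.mp hq).map_zero halt]
  · obtain ⟨φ, hφ⟩ : ∃ φ : Module.Dual (ZMod 2) H, φ c ≠ 0 := by
      by_contra! h
      exact hc ((Module.forall_dual_apply_eq_zero_iff (ZMod 2) c).mp h)
    have hφc : φ c = 1 := by revert hφ; generalize φ c = x; decide +revert
    have hmaps : ∀ q ∈ quadraticRefinements B, q + ⇑φ ∈ quadraticRefinements B := fun q hq =>
      mem_quadraticRefinements.mpr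
        ((mem_quadraticRefinements.mp hq).add_addMonoidHom φ.toAddMonoidHom)
    have hinv : ∀ q : H → ZMod 2, q + φ + φ = q := fun q => by
      ext x; simp [add_assoc, CharTwo.add_self_eq_zero]
    -- translating by `φ` permutes the refinements and flips the sign of every term
    have hflip : ∑ q ∈ quadraticRefinements B, (-1 : ℝ) ^ (q c).val =
        ∑ q ∈ quadraticRefinements B, -(-1 : ℝ) ^ (q c).val :=
      Finset.sum_nbij' (· + φ) (· + φ) hmaps hmaps (fun q _ => hinv q) (fun q _ => hinv q)
        fun q _ => by simp [ZMod.neg_one_pow_val_add, hφc, ZMod.val_one]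
    linarith [Finset.sum_neg_distrib (s := quadraticRefinements B)
      (f := fun q => (-1 : ℝ) ^ (q c).val)]

theorem sum_quadraticRefinements_sum_neg_one_pow_mul (halt : ∀ a : H, B a a = 0) (α : H) :
    ∑ q ∈ quadraticRefinements B, (∑ b, (-1 : ℝ) ^ (q b).val) * (-1) ^ (q α).val =
      (quadraticRefinements B).card := by
  have hneg : -α = α := neg_eq_iff_add_eq_zero.mpr <| by
    rw [← two_nsmul]; exact ZModModule.char_nsmul_eq_zero 2 α
  have hshift : ∀ q ∈ quadraticRefinements B, ∀ b,
      (-1 : ℝ) ^ (q b).val * (-1) ^ (q α).val = (-1) ^ (B b α).val * (-1) ^ (q (b + α)).val := by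
    intro q hq b
    have : q b + q α = B b α + q (b + α) := by
      rw [(mem_quadraticRefinements.mp hq) b α]
      linear_combination -CharTwo.add_self_eq_zero (B b α)
    rw [← ZMod.neg_one_pow_val_add, ← ZMod.neg_one_pow_val_add, this]
  calc ∑ q ∈ quadraticRefinements B, (∑ b, (-1 : ℝ) ^ (q b).val) * (-1) ^ (q α).val
      = ∑ b, (-1 : ℝ) ^ (B b α).val * ∑ q ∈ quadraticRefinements B, (-1) ^ (q (b + α)).val := by
        simp_rw [Finset.sum_mul, Finset.mul_sum]
        rw [Finset.sum_comm]
        exact Finset.sum_congr rfl fun b _ => Finset.sum_congr rfl fun q hq => hshift q hq b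
    _ = (quadraticRefinements B).card := by
        simp [sum_quadraticRefinements_neg_one_pow halt, add_eq_zero_iff_eq_neg, hneg, halt]

end QuadraticRefinement

theorem statement14_general {H : Type*} [AddCommGroup H] [Module (ZMod 2) H] [Fintype H]
    [DecidableEq H] (g : ℕ) (hcard : Fintype.card H = 2 ^ (2 * g))
    (B : H → H → ZMod 2)
    (hBl : ∀ a b c : H, B (a + b) c = B a c + B b c)
    (hBr : ∀ a b c : H, B a (b + c) = B a b + B a c)
    (halt : ∀ a : H, B a a = 0)
    (Arf : (H → ZMod 2) → ZMod 2)
    (hArf : ∀ q : H → ZMod 2, (∀ a b : H, q (a + b) = q a + q b + B a b) →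
      (-1 : ℝ) ^ ((Arf q).val) = ((2 : ℝ) ^ g)⁻¹ * ∑ a : H, (-1 : ℝ) ^ ((q a).val))
    {ES : Type*} [Fintype ES] (cls : ES → H) (w : ES → ℝ) :
    ∑ P : ES, w P
      = ((2 : ℝ) ^ g)⁻¹ *
        ∑ q ∈ Finset.univ.filter
            (fun q : H → ZMod 2 => ∀ a b : H, q (a + b) = q a + q b + B a b),
          (-1 : ℝ) ^ ((Arf q).val) *
            ∑ a : H, (-1 : ℝ) ^ ((q a).val) *
              ∑ P ∈ Finset.univ.filter (fun P : ES => cls P = a), w P := by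
  change _ = _ * ∑ q ∈ quadraticRefinements B, _
  obtain ⟨q₀, hq₀⟩ := exists_isQuadraticRefinement hBl hBr halt
  have hcardS : ((quadraticRefinements B).card : ℝ) = 2 ^ g * 2 ^ g := by
    rw [card_quadraticRefinements hq₀, hcard]; push_cast; ring
  have hterm : ∀ q ∈ quadraticRefinements B,
      (-1 : ℝ) ^ (Arf q).val *
          ∑ a, (-1 : ℝ) ^ (q a).val * ∑ P ∈ Finset.univ.filter (fun P => cls P = a), w P =
        ∑ P, ((2 : ℝ) ^ g)⁻¹ * ((∑ b, (-1 : ℝ) ^ (q b).val) * (-1) ^ (q (cls P)).val * w P) := by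
    intro q hq
    rw [hArf q (mem_quadraticRefinements.mp hq), Finset.sum_mul_sum_fiberwise, Finset.mul_sum]
    exact Finset.sum_congr rfl fun P _ => by ring
  rw [Finset.sum_congr rfl hterm, Finset.sum_comm]
  simp_rw [← Finset.mul_sum, ← Finset.sum_mul, sum_quadraticRefinements_sum_neg_one_pow_mul halt,
    hcardS]
  rw [← Finset.mul_sum]
  field_simp

/-- Let `G` be a finite graph embedded in a closed orientable surface
of genus `g`, so that `H = H₁(Σ;ℤ/2)` is `2g`-dimensional with nondegenerate alternating
intersection form `B`.  Abstracting the even subgraphs as a finite index type `ES` with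
homology-class map `cls` and weights `w`, and with the Arf invariant `Arf q ∈ ℤ/2` of a
quadratic form `q` refining `B` defined by `(-1)^{Arf q} = 2^{-g} Σ_α (-1)^{q α}`, the
high-temperature polynomial satisfies
`Z_high = 2^{-g} Σ_q (-1)^{Arf q} Σ_α (-1)^{q α} Z_α`, where
`Z_α = Σ_{P : cls P = α} w P` and the outer sum is over all quadratic forms refining
`B`. -/
theorem statement14 {H : Type*} [AddCommGroup H] [Module (ZMod 2) H] [Fintype H]
    [DecidableEq H] (g : ℕ) (hcard : Fintype.card H = 2 ^ (2 * g))
    (B : H → H → ZMod 2)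
    (hBl : ∀ a b c : H, B (a + b) c = B a c + B b c)
    (hBr : ∀ a b c : H, B a (b + c) = B a b + B a c)
    (halt : ∀ a : H, B a a = 0)
    (hnd : ∀ a : H, (∀ b : H, B a b = 0) → a = 0)
    (Arf : (H → ZMod 2) → ZMod 2)
    (hArf : ∀ q : H → ZMod 2, (∀ a b : H, q (a + b) = q a + q b + B a b) →
      (-1 : ℝ) ^ ((Arf q).val) = ((2 : ℝ) ^ g)⁻¹ * ∑ a : H, (-1 : ℝ) ^ ((q a).val))
    {ES : Type*} [Fintype ES] (cls : ES → H) (w : ES → ℝ) :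
    ∑ P : ES, w P
      = ((2 : ℝ) ^ g)⁻¹ *
        ∑ q ∈ Finset.univ.filter
            (fun q : H → ZMod 2 => ∀ a b : H, q (a + b) = q a + q b + B a b),
          (-1 : ℝ) ^ ((Arf q).val) *
            ∑ a : H, (-1 : ℝ) ^ ((q a).val) *
              ∑ P ∈ Finset.univ.filter (fun P : ES => cls P = a), w P :=
  statement14_general g hcard B hBl hBr halt Arf hArf cls w
end
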